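/- arXiv:1605.04103 — 2 statements merged into one kernel-verified Lean document; each statement's English description precedes it below -/
import Mathlib

section
/- Let λ ≠ 0 be a simple eigenvalue of εMΔ (ε > 0, Δ block-diagonal with structure 𝔹*) with right eigenvector x and left eigenvector y normalized so that ‖x‖ = ‖y‖ = 1 and y*x = |y*x|e^{-iθ} where λ = |λ|e^{iθ}. Set z = M*y. Then Re⟨zx*, εΔ⟩ = |λ|·|y*x| > 0, and consequently the orthogonal projection P_{𝔹*}(zx*) of zx* onto the subspace 𝔹* is nonzero. -/
open scoped BigOperators
open Matrix

/-- The complex-linear subspace of block-diagonal matrices determined by the block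
assignment `blk` (indices `i`, `j` are in the same block iff `blk i = blk j`) and the
set `S` of block labels of repeated *scalar* blocks: on a scalar block the matrix is a
scalar multiple of the identity, the full blocks are unconstrained, and all
off-diagonal blocks vanish. -/
def BD {n : ℕ} (blk : Fin n → ℕ) (S : Finset ℕ) : Set (Matrix (Fin n) (Fin n) ℂ) :=
  {Δ | (∀ i j, blk i ≠ blk j → Δ i j = 0) ∧
       (∀ i j, blk i = blk j → blk i ∈ S → i ≠ j → Δ i j = 0) ∧
       (∀ i j, blk i = blk j → blk i ∈ S → Δ i i = Δ j j)}

/-- The Frobenius inner product ⟨A,B⟩ = trace(A*B). -/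
noncomputable def finner {n : ℕ} (A B : Matrix (Fin n) (Fin n) ℂ) : ℂ :=
  ∑ i, ∑ j, (starRingEnd ℂ) (A i j) * B i j

/-!
`⟨zx*, εΔ⟩ = y*(εMΔ)x = λ·y*x`, which the phase normalization turns into the positive real
`|λ|·|y*x|`. Since `Δ ∈ 𝔹*`, the pairing with `Δ` does not change when `zx*` is replaced by its
orthogonal projection onto `𝔹*`, so that projection cannot vanish.
-/

section Frobenius

variable {n : ℕ}

lemma finner_smul_right (A B : Matrix (Fin n) (Fin n) ℂ) (c : ℂ) :
    finner A (c • B) = c * finner A B := by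
  simp only [finner, Matrix.smul_apply, smul_eq_mul, Finset.mul_sum]
  refine Finset.sum_congr rfl fun i _ => Finset.sum_congr rfl fun j _ => ?_
  ring

lemma finner_vecMulVec (u v : Fin n → ℂ) (B : Matrix (Fin n) (Fin n) ℂ) :
    finner (vecMulVec u v) B = star u ⬝ᵥ (B *ᵥ star v) := by
  simp only [finner, vecMulVec_apply, mulVec, dotProduct, Pi.star_apply, map_mul,
    Finset.mul_sum]
  refine Finset.sum_congr rfl fun i _ => Finset.sum_congr rfl fun j _ => ?_
  simp only [starRingEnd_apply]
  ring

lemma finner_vecMulVec_conjTranspose_mulVec (M Δ : Matrix (Fin n) (Fin n) ℂ)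
    (x y : Fin n → ℂ) :
    finner (vecMulVec (Mᴴ *ᵥ y) (star x)) Δ = star y ⬝ᵥ ((M * Δ) *ᵥ x) := by
  rw [finner_vecMulVec, star_star, star_mulVec, conjTranspose_conjTranspose,
    ← dotProduct_mulVec, mulVec_mulVec]

lemma ne_zero_of_finner_sub_eq_zero {s : Set (Matrix (Fin n) (Fin n) ℂ)}
    {A B P : Matrix (Fin n) (Fin n) ℂ} (hB : B ∈ s) (hAB : finner A B ≠ 0)
    (horth : ∀ B' ∈ s, finner (A - P) B' = 0) : P ≠ 0 := by
  rintro rfl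
  exact hAB (by simpa only [sub_zero] using horth B hB)

end Frobenius

theorem proj_of_eigvec_ne_zero_general {n : ℕ} (blk : Fin n → ℕ) (S : Finset ℕ)
    (M Δ : Matrix (Fin n) (Fin n) ℂ) (hΔ : Δ ∈ BD blk S)
    (ε : ℝ) (lam : ℂ) (hlam : lam ≠ 0)
    (x y : Fin n → ℂ)
    (hx : ((ε : ℂ) • (M * Δ)) *ᵥ x = lam • x)
    (hyx : star y ⬝ᵥ x ≠ 0)
    (hphase : lam * (star y ⬝ᵥ x)
      = ((‖lam‖ * ‖star y ⬝ᵥ x‖ : ℝ) : ℂ)) :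
    (finner (Matrix.vecMulVec (Mᴴ *ᵥ y) (star x)) ((ε : ℂ) • Δ)).re
        = ‖lam‖ * ‖star y ⬝ᵥ x‖ ∧
    0 < ‖lam‖ * ‖star y ⬝ᵥ x‖ ∧
    ∀ P, P ∈ BD blk S →
      (∀ Δ' ∈ BD blk S, finner (Matrix.vecMulVec (Mᴴ *ᵥ y) (star x) - P) Δ' = 0) →
      P ≠ 0 := by
  have hinner : finner (vecMulVec (Mᴴ *ᵥ y) (star x)) ((ε : ℂ) • Δ)
      = ((‖lam‖ * ‖star y ⬝ᵥ x‖ : ℝ) : ℂ) := by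
    rw [finner_vecMulVec_conjTranspose_mulVec, mul_smul_comm, hx, dotProduct_smul,
      smul_eq_mul, hphase]
  have hpos : 0 < ‖lam‖ * ‖star y ⬝ᵥ x‖ := by positivity
  have hΔ_ne : finner (vecMulVec (Mᴴ *ᵥ y) (star x)) Δ ≠ 0 := by
    refine right_ne_zero_of_mul (a := (ε : ℂ)) ?_
    rw [← finner_smul_right, hinner]
    exact_mod_cast hpos.ne'
  exact ⟨by rw [hinner, Complex.ofReal_re], hpos,
    fun P _ horth => ne_zero_of_finner_sub_eq_zero hΔ hΔ_ne horth⟩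

/-- Let λ ≠ 0 be a simple eigenvalue of εMΔ (with Δ ∈ 𝔹*), with unit right/left
eigenvectors x, y satisfying y*x ≠ 0 and the phase normalization
λ·(y*x) = |λ|·|y*x|.  Then, with z = M*y, Re⟨zx*, εΔ⟩ = |λ|·|y*x| > 0, and
consequently the orthogonal projection P_{𝔹*}(zx*) of zx* onto 𝔹* is nonzero. -/
theorem proj_of_eigvec_ne_zero {n : ℕ} (blk : Fin n → ℕ) (S : Finset ℕ)
    (M Δ : Matrix (Fin n) (Fin n) ℂ) (hΔ : Δ ∈ BD blk S)
    (ε : ℝ) (hε : 0 < ε) (lam : ℂ) (hlam : lam ≠ 0)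
    (x y : Fin n → ℂ)
    (hx : ((ε : ℂ) • (M * Δ)) *ᵥ x = lam • x)
    (hy : ((ε : ℂ) • (M * Δ))ᴴ *ᵥ y = (starRingEnd ℂ) lam • y)
    (hxn : ∑ i, ‖x i‖ ^ 2 = 1)
    (hyn : ∑ i, ‖y i‖ ^ 2 = 1)
    (hyx : star y ⬝ᵥ x ≠ 0)
    (hphase : lam * (star y ⬝ᵥ x)
      = ((‖lam‖ * ‖star y ⬝ᵥ x‖ : ℝ) : ℂ)) :
    (finner (Matrix.vecMulVec (Mᴴ *ᵥ y) (star x)) ((ε : ℂ) • Δ)).re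
        = ‖lam‖ * ‖star y ⬝ᵥ x‖ ∧
    0 < ‖lam‖ * ‖star y ⬝ᵥ x‖ ∧
    ∀ P, P ∈ BD blk S →
      (∀ Δ' ∈ BD blk S, finner (Matrix.vecMulVec (Mᴴ *ᵥ y) (star x) - P) Δ' = 0) →
      P ≠ 0 :=
  proj_of_eigvec_ne_zero_general blk S M Δ hΔ ε lam hlam x y hx hyx hphase
end

section
/- Let Δ(ε) be block-diagonal of unit-norm-block structure and suppose the stationarity relation Δ = D·P_{𝔹*}(zx*) holds, where D ∈ 𝔹* is a positive diagonal matrix chosen so that each scalar block δ_i of Δ satisfies |δ_i| = 1 and each full block Δ_j satisfies ‖Δ_j‖_F = 1. Then, with x, z partitioned conformally, Re⟨yx*, MΔ⟩ = ⟨P_{𝔹*}(zx*), Δ⟩ = Σ_{i=1}^{S} |z_i* x_i| + Σ_{j=1}^{F} ‖z_{S+j}‖·‖x_{S+j}‖, and this quantity is strictly positive provided z_i*x_i ≠ 0 for all i and ‖z_{S+j}‖‖x_{S+j}‖ ≠ 0 for all j. -/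
open scoped BigOperators
open Matrix

/-- The inner product x_k* z_k of the subvectors of x and z belonging to block k. -/
noncomputable def blockInner {n : ℕ} (blk : Fin n → ℕ) (x z : Fin n → ℂ) (k : ℕ) : ℂ :=
  ∑ i ∈ Finset.univ.filter (fun i => blk i = k), (starRingEnd ℂ) (x i) * z i

/-- The Euclidean norm of the subvector of v belonging to block k. -/
noncomputable def blockNorm {n : ℕ} (blk : Fin n → ℕ) (v : Fin n → ℂ) (k : ℕ) : ℝ :=
  Real.sqrt (∑ i ∈ Finset.univ.filter (fun i => blk i = k), ‖v i‖ ^ 2)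

/-!
Since `z = Mᴴ y`, the inner product `⟨y x*, M Δ⟩` equals `⟨z x*, Δ⟩`, and as `Δ` is block
diagonal it splits into the inner products of the diagonal blocks. On a scalar block `k`,
`Δ_k = d_k b_k I` with `b_k = x_k* z_k`, which contributes `d_k |b_k|²`; on a full block
`Δ_k = d_k z_k x_k*` contributes `d_k ‖z_k‖² ‖x_k‖²`. Writing `w_k` for `|b_k|`, resp.
`‖z_k‖ ‖x_k‖`, the normalization `d_k w_k = 1` turns each contribution `d_k w_k²` into `w_k`
and forces `w_k > 0`, and there is at least one block because `n > 0`.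
-/

section BlockDecomposition

variable {n : ℕ}

lemma finner_eq_trace (A B : Matrix (Fin n) (Fin n) ℂ) : finner A B = (Aᴴ * B).trace := by
  simp only [finner, Matrix.trace, Matrix.diag, Matrix.mul_apply, Matrix.conjTranspose_apply,
    RCLike.star_def]
  exact Finset.sum_comm

lemma finner_mul_right (A M B : Matrix (Fin n) (Fin n) ℂ) :
    finner A (M * B) = finner (Mᴴ * A) B := by
  rw [finner_eq_trace, finner_eq_trace, Matrix.conjTranspose_mul,
    Matrix.conjTranspose_conjTranspose, Matrix.mul_assoc]

lemma finner_vecMulVec_mul_right (M B : Matrix (Fin n) (Fin n) ℂ) (y x : Fin n → ℂ) :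
    finner (vecMulVec y (star x)) (M * B) = finner (vecMulVec (Mᴴ *ᵥ y) (star x)) B := by
  rw [finner_mul_right, Matrix.mul_vecMulVec]

variable (blk : Fin n → ℕ)

noncomputable def blockFinner (A B : Matrix (Fin n) (Fin n) ℂ) (k : ℕ) : ℂ :=
  ∑ i ∈ Finset.univ.filter (fun i => blk i = k), ∑ j ∈ Finset.univ.filter (fun j => blk j = k),
    (starRingEnd ℂ) (A i j) * B i j

lemma finner_eq_sum_blockFinner (A B : Matrix (Fin n) (Fin n) ℂ)
    (hB : ∀ i j, blk i ≠ blk j → B i j = 0) :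
    finner A B = ∑ k ∈ Finset.univ.image blk, blockFinner blk A B k := by
  rw [finner, ← Finset.sum_fiberwise_of_maps_to (g := blk)
    (fun i _ => Finset.mem_image_of_mem blk (Finset.mem_univ i))]
  refine Finset.sum_congr rfl fun k _ => Finset.sum_congr rfl fun i hi => ?_
  refine (Finset.sum_subset (Finset.filter_subset _ _) fun j _ hj => ?_).symm
  rw [hB i j (by simp_all [eq_comm]), mul_zero]

lemma blockNorm_sq (v : Fin n → ℂ) (k : ℕ) :
    blockNorm blk v k ^ 2 = ∑ i ∈ Finset.univ.filter (fun i => blk i = k), ‖v i‖ ^ 2 :=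
  Real.sq_sqrt (Finset.sum_nonneg fun _ _ => sq_nonneg _)

variable {blk}

lemma blockFinner_of_scalar {Δ : Matrix (Fin n) (Fin n) ℂ} {x z : Fin n → ℂ} {k : ℕ} {c : ℂ}
    (hΔ : ∀ i j, blk i = k → blk j = k → Δ i j = if i = j then c else 0) :
    blockFinner blk (vecMulVec z (star x)) Δ k = (starRingEnd ℂ) (blockInner blk x z k) * c := by
  rw [blockInner, map_sum, Finset.sum_mul]
  refine Finset.sum_congr rfl fun i hi => ?_
  have hik : blk i = k := (Finset.mem_filter.mp hi).2
  rw [Finset.sum_eq_single_of_mem i hi fun j hj hji => by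
    rw [hΔ i j hik (Finset.mem_filter.mp hj).2, if_neg (Ne.symm hji), mul_zero]]
  rw [hΔ i i hik hik, if_pos rfl, vecMulVec_apply, Pi.star_apply, RCLike.star_def, mul_comm (z i)]

lemma blockFinner_of_full {Δ : Matrix (Fin n) (Fin n) ℂ} {x z : Fin n → ℂ} {k : ℕ} {c : ℂ}
    (hΔ : ∀ i j, blk i = k → blk j = k → Δ i j = c * (z i * (starRingEnd ℂ) (x j))) :
    blockFinner blk (vecMulVec z (star x)) Δ k
      = c * ((blockNorm blk z k ^ 2 * blockNorm blk x k ^ 2 : ℝ) : ℂ) := by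
  rw [blockNorm_sq, blockNorm_sq, Finset.sum_mul_sum, Complex.ofReal_sum, Finset.mul_sum,
    blockFinner]
  refine Finset.sum_congr rfl fun i hi => ?_
  rw [Complex.ofReal_sum, Finset.mul_sum]
  refine Finset.sum_congr rfl fun j hj => ?_
  rw [hΔ i j (Finset.mem_filter.mp hi).2 (Finset.mem_filter.mp hj).2, vecMulVec_apply,
    Pi.star_apply, RCLike.star_def, mul_left_comm, Complex.conj_mul', norm_mul, RCLike.norm_conj]
  push_cast
  ring

end BlockDecomposition

lemma mul_sq_eq_self_of_mul_eq_one {d t : ℝ} (h : d * t = 1) : d * t ^ 2 = t := by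
  rw [sq, ← mul_assoc, h, one_mul]

theorem stationary_inner_product_formula_general {n : ℕ} (hn : 0 < n)
    (blk : Fin n → ℕ) (S : Finset ℕ)
    (M Δ : Matrix (Fin n) (Fin n) ℂ) (x y z : Fin n → ℂ) (hz : z = Mᴴ *ᵥ y)
    (hoff : ∀ i j, blk i ≠ blk j → Δ i j = 0)
    (d : ℕ → ℝ)
    (hscal : ∀ i j, blk i = blk j → blk i ∈ S →
      Δ i j = if i = j then ((d (blk i) : ℝ) : ℂ) * blockInner blk x z (blk i) else 0)
    (hscalnorm : ∀ k ∈ Finset.univ.image blk, k ∈ S →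
      d k * ‖blockInner blk x z k‖ = 1)
    (hfull : ∀ i j, blk i = blk j → blk i ∉ S →
      Δ i j = ((d (blk i) : ℝ) : ℂ) * (z i * (starRingEnd ℂ) (x j)))
    (hfullnorm : ∀ k ∈ Finset.univ.image blk, k ∉ S →
      d k * (blockNorm blk z k * blockNorm blk x k) = 1) :
    (finner (Matrix.vecMulVec y (star x)) (M * Δ)).re
      = (∑ k ∈ (Finset.univ.image blk).filter (fun k => k ∈ S),
          ‖blockInner blk x z k‖)
        + ∑ k ∈ (Finset.univ.image blk).filter (fun k => k ∉ S),
            blockNorm blk z k * blockNorm blk x k ∧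
    0 < (∑ k ∈ (Finset.univ.image blk).filter (fun k => k ∈ S),
          ‖blockInner blk x z k‖)
        + ∑ k ∈ (Finset.univ.image blk).filter (fun k => k ∉ S),
            blockNorm blk z k * blockNorm blk x k := by
  set w : ℕ → ℝ := fun k =>
    if k ∈ S then ‖blockInner blk x z k‖ else blockNorm blk z k * blockNorm blk x k
  have hw_norm : ∀ k ∈ Finset.univ.image blk, d k * w k = 1 := fun k hk => by
    by_cases hkS : k ∈ S
    · simpa [w, hkS] using hscalnorm k hk hkS
    · simpa [w, hkS] using hfullnorm k hk hkS
  have hw_nonneg : ∀ k, 0 ≤ w k := fun k => by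
    simp only [w]
    split_ifs
    exacts [norm_nonneg _, mul_nonneg (Real.sqrt_nonneg _) (Real.sqrt_nonneg _)]
  have hblock : ∀ k ∈ Finset.univ.image blk,
      blockFinner blk (vecMulVec z (star x)) Δ k = ((d k * w k ^ 2 : ℝ) : ℂ) := fun k _ => by
    by_cases hkS : k ∈ S
    · rw [blockFinner_of_scalar fun i j hi hj => by
          rw [hscal i j (hi.trans hj.symm) (hi ▸ hkS), hi], mul_left_comm, Complex.conj_mul']
      simp [w, hkS]
    · rw [blockFinner_of_full fun i j hi hj => by rw [hfull i j (hi.trans hj.symm) (hi ▸ hkS), hi]]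
      simp [w, hkS, mul_pow]
  have hre :
      (finner (vecMulVec y (star x)) (M * Δ)).re = ∑ k ∈ Finset.univ.image blk, w k := by
    rw [finner_vecMulVec_mul_right, ← hz, finner_eq_sum_blockFinner blk _ _ hoff,
      Finset.sum_congr rfl hblock, ← Complex.ofReal_sum, Complex.ofReal_re]
    exact Finset.sum_congr rfl fun k hk => mul_sq_eq_self_of_mul_eq_one (hw_norm k hk)
  have hpos : 0 < ∑ k ∈ Finset.univ.image blk, w k :=
    Finset.sum_pos
      (fun k hk => (hw_nonneg k).lt_of_ne (right_ne_zero_of_mul_eq_one (hw_norm k hk)).symm)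
      ⟨_, Finset.mem_image_of_mem blk (Finset.mem_univ ⟨0, hn⟩)⟩
  rw [← Finset.sum_ite]
  exact ⟨hre, hpos⟩

/-- If Δ satisfies the stationarity relation Δ = D·P_{𝔹*}(zx*) with a positive
diagonal scaling normalizing each block (|δ_i| = 1, ‖Δ_j‖_F = 1), then
Re⟨yx*, MΔ⟩ = Σ_i |z_i* x_i| + Σ_j ‖z_{S+j}‖·‖x_{S+j}‖ > 0. -/
theorem stationary_inner_product_formula {n : ℕ} (hn : 0 < n)
    (blk : Fin n → ℕ) (S : Finset ℕ)
    (M Δ : Matrix (Fin n) (Fin n) ℂ) (x y z : Fin n → ℂ) (hz : z = Mᴴ *ᵥ y)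
    (hoff : ∀ i j, blk i ≠ blk j → Δ i j = 0)
    (d : ℕ → ℝ) (hd : ∀ k ∈ Finset.univ.image blk, 0 < d k)
    (hscal : ∀ i j, blk i = blk j → blk i ∈ S →
      Δ i j = if i = j then ((d (blk i) : ℝ) : ℂ) * blockInner blk x z (blk i) else 0)
    (hscalnorm : ∀ k ∈ Finset.univ.image blk, k ∈ S →
      d k * ‖blockInner blk x z k‖ = 1)
    (hfull : ∀ i j, blk i = blk j → blk i ∉ S →
      Δ i j = ((d (blk i) : ℝ) : ℂ) * (z i * (starRingEnd ℂ) (x j)))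
    (hfullnorm : ∀ k ∈ Finset.univ.image blk, k ∉ S →
      d k * (blockNorm blk z k * blockNorm blk x k) = 1) :
    (finner (Matrix.vecMulVec y (star x)) (M * Δ)).re
      = (∑ k ∈ (Finset.univ.image blk).filter (fun k => k ∈ S),
          ‖blockInner blk x z k‖)
        + ∑ k ∈ (Finset.univ.image blk).filter (fun k => k ∉ S),
            blockNorm blk z k * blockNorm blk x k ∧
    0 < (∑ k ∈ (Finset.univ.image blk).filter (fun k => k ∈ S),
          ‖blockInner blk x z k‖)
        + ∑ k ∈ (Finset.univ.image blk).filter (fun k => k ∉ S),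
            blockNorm blk z k * blockNorm blk x k :=
  stationary_inner_product_formula_general hn blk S M Δ x y z hz hoff d hscal hscalnorm hfull
    hfullnorm
end
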